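/- Define for k ∈ ℕ, a.e. t ∈ [0,1]: x₁^k(t) = (t − 1/2)/k, x₂^k(t) = 0, v₁^k(t) = v₂^k(t) = k²/(3(t − 1/2)²). Then for each k and a.e. t ∈ [0,1] with t ≠ 1/2: ∇ₓφ(x^k(t),t) + v₁^k(t)∇ₓg₁(x^k(t),t) + v₂^k(t)∇ₓg₂(x^k(t),t) = 0, where φ(x,t) = (t−1/2)x₁, g₁(x,t) = −(t−1/2)x₁³ + x₂, g₂(x,t) = −x₂. Moreover x^k(t) → (0,0), v_j^k(t)·max{−g_j(x^k(t),t),0} → 0, and v_j^k(t) ≥ 0 a.e., so x̄ ≡ (0,0) is a pw-AKKT solution. -/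

import Mathlib

/-!
At `x^k(t) = ((t - 1/2)/k, 0)` the gradient of `g₂` cancels the `x₂`-component of that of `g₁`,
and the choice `v^k = k² / (3 (t - 1/2)²)` makes `3 v^k (x₁^k)² = 1`, which is exactly what cancels
the `x₁`-components. The only violated constraint is `g₁`, by `(t - 1/2)⁴ / k³`, so the
complementarity product is `(t - 1/2)² / (3k) → 0`.
-/

open Set Filter Topology ContinuousLinearMap

section Gradients

variable (c : ℝ) (p : ℝ × ℝ)

lemma fderiv_const_mul_fst : fderiv ℝ (fun y : ℝ × ℝ => c * y.1) p = c • fst ℝ ℝ ℝ :=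
  (hasFDerivAt_fst.const_mul c).fderiv

lemma fderiv_neg_const_mul_fst_pow_three_add_snd :
    fderiv ℝ (fun y : ℝ × ℝ => -c * y.1 ^ 3 + y.2) p =
      (-(3 * c * p.1 ^ 2)) • fst ℝ ℝ ℝ + snd ℝ ℝ ℝ := by
  rw [HasFDerivAt.fderiv (((hasFDerivAt_fst.pow 3).const_mul (-c)).fun_add hasFDerivAt_snd)]
  ext
  · simp; ring
  · simp

lemma fderiv_neg_snd : fderiv ℝ (fun y : ℝ × ℝ => -y.2) p = -snd ℝ ℝ ℝ :=
  hasFDerivAt_snd.neg.fderiv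

end Gradients

lemma fderiv_lagrangian_eq_zero {c v a : ℝ} (b : ℝ) (hva : 3 * v * a ^ 2 = 1) :
    fderiv ℝ (fun y : ℝ × ℝ => c * y.1) (a, b) +
      v • fderiv ℝ (fun y : ℝ × ℝ => -c * y.1 ^ 3 + y.2) (a, b) +
      v • fderiv ℝ (fun y : ℝ × ℝ => -y.2) (a, b) = 0 := by
  rw [fderiv_const_mul_fst, fderiv_neg_const_mul_fst_pow_three_add_snd, fderiv_neg_snd]
  ext <;> simp
  linear_combination -c * hva

lemma tendsto_multiplier_mul_cubic_violation {c : ℝ} (hc : c ≠ 0) :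
    Tendsto (fun k : ℕ => (k : ℝ) ^ 2 / (3 * c ^ 2) * max (-(-c * (c / k) ^ 3 + 0)) 0)
      atTop (𝓝 0) := by
  refine (tendsto_const_div_atTop_nhds_zero_nat (c ^ 2 / 3)).congr' ?_
  filter_upwards [eventually_ne_atTop 0] with k hk
  have hviolation : -(-c * (c / k) ^ 3 + 0) = c ^ 4 / k ^ 3 := by ring
  rw [hviolation, max_eq_left (by positivity)]
  field_simp

/-- For the example with `φ(y,t) = (t-1/2) y₁`, `g₁(y,t) = -(t-1/2) y₁³ + y₂`,
`g₂(y,t) = -y₂`, the sequences `x^k(t) = ((t-1/2)/k, 0)` and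
`v₁^k(t) = v₂^k(t) = k²/(3(t-1/2)²)` satisfy exact stationarity of the Lagrangian
at `x^k(t)` for `t ≠ 1/2`, converge pointwise to `x̄ ≡ (0,0)`, satisfy approximate
complementarity, and have nonnegative multipliers; hence `x̄` is pw-AKKT. -/
theorem stmt6
    (x : ℕ → ℝ → ℝ × ℝ) (v₁ v₂ : ℕ → ℝ → ℝ)
    (hx : ∀ k t, x k t = ((t - 1 / 2) / (k : ℝ), 0))
    (hv₁ : ∀ k t, v₁ k t = (k : ℝ) ^ 2 / (3 * (t - 1 / 2) ^ 2))
    (hv₂ : ∀ k t, v₂ k t = (k : ℝ) ^ 2 / (3 * (t - 1 / 2) ^ 2)) :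
    (∀ k : ℕ, 1 ≤ k → ∀ t ∈ Icc (0:ℝ) 1, t ≠ 1 / 2 →
      fderiv ℝ (fun y : ℝ × ℝ => (t - 1 / 2) * y.1) (x k t) +
        v₁ k t • fderiv ℝ (fun y : ℝ × ℝ => -(t - 1 / 2) * y.1 ^ 3 + y.2) (x k t) +
        v₂ k t • fderiv ℝ (fun y : ℝ × ℝ => -y.2) (x k t) = 0) ∧
    (∀ t : ℝ, Tendsto (fun k => x k t) atTop (𝓝 ((0:ℝ), (0:ℝ)))) ∧
    (∀ t ∈ Icc (0:ℝ) 1, t ≠ 1 / 2 →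
      Tendsto (fun k => v₁ k t *
        max (-(-(t - 1 / 2) * (x k t).1 ^ 3 + (x k t).2)) 0) atTop (𝓝 0) ∧
      Tendsto (fun k => v₂ k t * max (-(-(x k t).2)) 0) atTop (𝓝 0)) ∧
    (∀ k t, 0 ≤ v₁ k t ∧ 0 ≤ v₂ k t) := by
  simp only [hx, hv₁, hv₂]
  refine ⟨fun k hk t _ ht => fderiv_lagrangian_eq_zero 0 ?_, fun t => ?_,
    fun t _ ht => ⟨tendsto_multiplier_mul_cubic_violation (sub_ne_zero.mpr ht), ?_⟩,
    fun k t => ⟨by positivity, by positivity⟩⟩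
  · have hk0 : (k : ℝ) ≠ 0 := by positivity
    have ht0 : t - 1 / 2 ≠ 0 := sub_ne_zero.mpr ht
    generalize t - 1 / 2 = c at ht0 ⊢
    field_simp
  · exact (tendsto_const_div_atTop_nhds_zero_nat _).prodMk_nhds tendsto_const_nhds
  · simp
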